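/- arXiv:1311.7168 — 3 statements merged into one kernel-verified Lean document; each statement's English description precedes it below -/
import Mathlib

section
/- For every ρ ∈ ℝ^m and every x ∈ ∂Δ, the second partial derivative of B in s at s = 0 equals B_ss(0,ρ,x) = Σ_{i=0}^m (x_i − μ_i(ρ))² / μ_i(ρ), and this quantity is strictly positive. -/
open MeasureTheory Real Filter Set

noncomputable section

/-- The unit simplex Δ in ℝ^m. -/
def simplex (m : ℕ) : Set (Fin m → ℝ) :=
  {l | (∀ i, 0 ≤ l i) ∧ ∑ i, l i ≤ 1}

/-- ⟨λ̂, log λ̂⟩ = Σ_{i=0}^m λ_i log λ_i, with λ_0 = 1 - Σ λ_i.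
Note `Real.log 0 = 0`, so the convention 0·log 0 = 0 holds. -/
def ent (m : ℕ) (l : Fin m → ℝ) : ℝ :=
  (1 - ∑ i, l i) * Real.log (1 - ∑ i, l i) + ∑ i, l i * Real.log (l i)

/-- b(λ,ρ) = log(1+|e^ρ|) + Σ_{i=0}^m (λ_i log λ_i − ρ_i λ_i), where ρ_0 = 0. -/
def bfun (m : ℕ) (l ρ : Fin m → ℝ) : ℝ :=
  Real.log (1 + ∑ i, Real.exp (ρ i)) + ent m l - ∑ i, ρ i * l i

/-- μ(ρ) : μ_i(ρ) = e^{ρ_i}/(1+|e^ρ|) for i = 1,…,m. -/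
def mu (m : ℕ) (ρ : Fin m → ℝ) : Fin m → ℝ :=
  fun i => Real.exp (ρ i) / (1 + ∑ j, Real.exp (ρ j))

/-- B(s,ρ,x) = b((1−s)μ(ρ) + s x, ρ). -/
def Bfun (m : ℕ) (s : ℝ) (ρ x : Fin m → ℝ) : ℝ :=
  bfun m (fun i => (1 - s) * mu m ρ i + s * x i) ρ

/-- D(t,ρ) = m!·vol({λ ∈ Δ : b(λ,ρ) ≤ t}). -/
def Dfun (m : ℕ) (t : ℝ) (ρ : Fin m → ℝ) : ℝ :=
  (m.factorial : ℝ) * (volume {l ∈ simplex m | bfun m l ρ ≤ t}).toReal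

/-- F_n(ρ) = ∫_{Δ^n} max_j [⟨ρ,λ^j⟩ − ⟨λ̂^j, log λ̂^j⟩] dλ^1⋯dλ^n, each dλ^j = m!·Lebesgue. -/
def Fn (m n : ℕ) (ρ : Fin m → ℝ) : ℝ :=
  ((m.factorial : ℝ)) ^ n *
    ∫ L in {L : Fin n → Fin m → ℝ | ∀ j, L j ∈ simplex m},
      ⨆ j, (∑ i, ρ i * L j i - ent m (L j))

/-- Partial derivative in the variable ρ_p. -/
def pderivR (m : ℕ) (p : Fin m) (f : (Fin m → ℝ) → ℝ) (ρ : Fin m → ℝ) : ℝ :=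
  deriv (fun r => f (Function.update ρ p r)) (ρ p)

/-- H = {(t,ρ,x) ∈ (0,∞) × ℝ^m × ∂Δ : t < b(x,ρ)}. -/
def Hset (m : ℕ) : Set (ℝ × (Fin m → ℝ) × (Fin m → ℝ)) :=
  {q | q.2.2 ∈ frontier (simplex m) ∧ 0 < q.1 ∧ q.1 < bfun m q.2.2 q.2.1}

/-!
Along the segment `s ↦ (1 - s) μ + s x`, `B` is the sum `∑_{i=0}^m λ̂_i log λ̂_i` over coordinates
that are affine in `s`, plus a function affine in `s`. Since `(t log t)'' = 1 / t`, the second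
derivative at `s = 0` is `∑_{i=0}^m (x̂_i - μ̂_i)² / μ̂_i`. All `μ̂_i` are positive, so `μ` lies in
the interior of `Δ`; as `x` lies on the boundary, `x ≠ μ` and the sum is positive.
-/

open Topology

section SegmentEntropy

variable {ι : Type*} [Fintype ι] {a b : ι → ℝ}

lemma hasDerivAt_segment (a b s : ℝ) : HasDerivAt (fun t => (1 - t) * a + t * b) (b - a) s := by
  have h : (fun t : ℝ => (1 - t) * a + t * b) = fun t => a + t * (b - a) := by funext t; ring
  rw [h]
  simpa using ((hasDerivAt_id' s).mul_const (b - a)).const_add a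

lemma hasDerivAt_sum_mul_log_segment {s : ℝ} (h : ∀ i, (1 - s) * a i + s * b i ≠ 0) :
    HasDerivAt (fun t => ∑ i, ((1 - t) * a i + t * b i) * log ((1 - t) * a i + t * b i))
      (∑ i, (b i - a i) * (log ((1 - s) * a i + s * b i) + 1)) s := by
  refine HasDerivAt.fun_sum fun i _ => ?_
  have := (Real.hasDerivAt_mul_log (h i)).comp s (hasDerivAt_segment (a i) (b i) s)
  rwa [mul_comm] at this

lemma hasDerivAt_sum_log_segment {s : ℝ} (h : ∀ i, (1 - s) * a i + s * b i ≠ 0) :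
    HasDerivAt (fun t => ∑ i, (b i - a i) * (log ((1 - t) * a i + t * b i) + 1))
      (∑ i, (b i - a i) ^ 2 / ((1 - s) * a i + s * b i)) s := by
  refine HasDerivAt.fun_sum fun i _ => ?_
  refine ((((hasDerivAt_segment (a i) (b i) s).log (h i)).add_const 1).const_mul
    (b i - a i)).congr_deriv ?_
  ring

lemma eventually_segment_ne_zero (ha : ∀ i, a i ≠ 0) :
    ∀ᶠ t in 𝓝 (0 : ℝ), ∀ i, (1 - t) * a i + t * b i ≠ 0 :=
  eventually_all.2 fun i =>
    (by fun_prop : Continuous fun t : ℝ => (1 - t) * a i + t * b i).continuousAt.eventually_ne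
      (by simpa using ha i)

lemma sum_sq_sub_div_pos (ha : ∀ i, 0 < a i) (hab : a ≠ b) :
    0 < ∑ i, (b i - a i) ^ 2 / a i := by
  obtain ⟨j, hj⟩ := Function.ne_iff.1 hab
  refine Finset.sum_pos' (fun i _ => div_nonneg (sq_nonneg _) (ha i).le)
    ⟨j, Finset.mem_univ _, div_pos ?_ (ha j)⟩
  have : b j - a j ≠ 0 := sub_ne_zero.2 (Ne.symm hj)
  positivity

end SegmentEntropy

section Hat

variable {m : ℕ}

/-- The paper's `λ̂ = (λ_0, λ_1, …, λ_m)`, where `λ_0 = 1 - ∑ λ_i`. -/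
def hat (l : Fin m → ℝ) : Fin (m + 1) → ℝ :=
  Fin.cons (1 - ∑ i, l i) l

lemma hat_injective : Function.Injective (hat : (Fin m → ℝ) → Fin (m + 1) → ℝ) :=
  fun _ _ h => funext fun i => congrFun h i.succ

lemma continuous_hat : Continuous (hat : (Fin m → ℝ) → Fin (m + 1) → ℝ) := by
  unfold hat
  fun_prop

lemma hat_segment (p q : Fin m → ℝ) (s : ℝ) :
    hat (fun i => (1 - s) * p i + s * q i) = fun i => (1 - s) * hat p i + s * hat q i := by
  funext i
  refine Fin.cases ?_ (fun j => rfl) i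
  simp only [hat, Fin.cons_zero, Finset.sum_add_distrib, ← Finset.mul_sum]
  ring

lemma ent_eq_sum_hat (l : Fin m → ℝ) : ent m l = ∑ i, hat l i * log (hat l i) := by
  simp [ent, hat, Fin.sum_univ_succ]

lemma sum_sq_sub_div_hat (p q : Fin m → ℝ) :
    ((1 - ∑ i, q i) - (1 - ∑ i, p i)) ^ 2 / (1 - ∑ i, p i) + ∑ i, (q i - p i) ^ 2 / p i
      = ∑ i, (hat q i - hat p i) ^ 2 / hat p i := by
  simp [hat, Fin.sum_univ_succ]

lemma hat_mu_pos (ρ : Fin m → ℝ) (i : Fin (m + 1)) : 0 < hat (mu m ρ) i := by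
  have hZ : 0 < 1 + ∑ j, exp (ρ j) := by positivity
  refine Fin.cases ?_ (fun j => div_pos (exp_pos _) hZ) i
  have hsum : ∑ j, mu m ρ j = (∑ j, exp (ρ j)) / (1 + ∑ j, exp (ρ j)) := by
    simp [mu, Finset.sum_div]
  simp only [hat, Fin.cons_zero, hsum, sub_pos, div_lt_one hZ]
  linarith

lemma mu_mem_interior_simplex (ρ : Fin m → ℝ) : mu m ρ ∈ interior (simplex m) := by
  have hopen : IsOpen {l : Fin m → ℝ | ∀ i, 0 < hat l i} := by
    simp only [Set.ofPred_forall]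
    exact isOpen_iInter_of_finite fun i =>
      isOpen_lt continuous_const ((continuous_apply i).comp continuous_hat)
  have hsub : {l : Fin m → ℝ | ∀ i, 0 < hat l i} ⊆ simplex m := fun l hl => by
    have h0 := hl 0
    simp only [hat, Fin.cons_zero, sub_pos] at h0
    exact ⟨fun i => (hl i.succ).le, h0.le⟩
  exact interior_maximal hsub hopen (hat_mu_pos ρ)

lemma Bfun_eq_sum_hat (s : ℝ) (ρ x : Fin m → ℝ) :
    Bfun m s ρ x = log (1 + ∑ i, exp (ρ i))
      + ∑ i, ((1 - s) * hat (mu m ρ) i + s * hat x i) * log ((1 - s) * hat (mu m ρ) i + s * hat x i)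
      - ∑ i, ρ i * ((1 - s) * mu m ρ i + s * x i) := by
  rw [Bfun, bfun, ent_eq_sum_hat, hat_segment]

lemma deriv_deriv_Bfun_zero (ρ x : Fin m → ℝ) :
    deriv (deriv fun s => Bfun m s ρ x) 0
      = ∑ i, (hat x i - hat (mu m ρ) i) ^ 2 / hat (mu m ρ) i := by
  have hne : ∀ i, hat (mu m ρ) i ≠ 0 := fun i => (hat_mu_pos ρ i).ne'
  have hlin : ∀ s, HasDerivAt (fun t => ∑ i, ρ i * ((1 - t) * mu m ρ i + t * x i))
      (∑ i, ρ i * (x i - mu m ρ i)) s := fun s =>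
    HasDerivAt.fun_sum fun i _ => (hasDerivAt_segment (mu m ρ i) (x i) s).const_mul (ρ i)
  have hderiv : deriv (fun s => Bfun m s ρ x) =ᶠ[𝓝 0] fun s =>
      ∑ i, (hat x i - hat (mu m ρ) i) * (log ((1 - s) * hat (mu m ρ) i + s * hat x i) + 1)
        - ∑ i, ρ i * (x i - mu m ρ i) := by
    filter_upwards [eventually_segment_ne_zero (b := hat x) hne] with s hs
    simp only [Bfun_eq_sum_hat]
    exact (((hasDerivAt_sum_mul_log_segment hs).const_add _).sub (hlin s)).deriv
  rw [hderiv.deriv_eq]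
  simpa using ((hasDerivAt_sum_log_segment (s := 0) (b := hat x) (by simpa using hne)).sub_const
    (∑ i, ρ i * (x i - mu m ρ i))).deriv

end Hat

theorem B_second_deriv_at_zero_general (m : ℕ) (ρ : Fin m → ℝ)
    (x : Fin m → ℝ) (hx : x ∈ frontier (simplex m)) :
    deriv (deriv (fun s => Bfun m s ρ x)) 0
        = ((1 - ∑ i, x i) - (1 - ∑ i, mu m ρ i)) ^ 2 / (1 - ∑ i, mu m ρ i)
          + ∑ i, (x i - mu m ρ i) ^ 2 / mu m ρ i ∧
    0 < ((1 - ∑ i, x i) - (1 - ∑ i, mu m ρ i)) ^ 2 / (1 - ∑ i, mu m ρ i)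
          + ∑ i, (x i - mu m ρ i) ^ 2 / mu m ρ i := by
  have hx_ne : mu m ρ ≠ x := fun h => hx.2 (h ▸ mu_mem_interior_simplex ρ)
  rw [sum_sq_sub_div_hat]
  exact ⟨deriv_deriv_Bfun_zero ρ x, sum_sq_sub_div_pos (hat_mu_pos ρ) (hat_injective.ne hx_ne)⟩

/-- B_ss(0,ρ,x) = Σ_{i=0}^m (x_i − μ_i(ρ))²/μ_i(ρ) > 0. -/
theorem B_second_deriv_at_zero (m : ℕ) (hm : 1 ≤ m) (ρ : Fin m → ℝ)
    (x : Fin m → ℝ) (hx : x ∈ frontier (simplex m)) :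
    deriv (deriv (fun s => Bfun m s ρ x)) 0
        = ((1 - ∑ i, x i) - (1 - ∑ i, mu m ρ i)) ^ 2 / (1 - ∑ i, mu m ρ i)
          + ∑ i, (x i - mu m ρ i) ^ 2 / mu m ρ i ∧
    0 < ((1 - ∑ i, x i) - (1 - ∑ i, mu m ρ i)) ^ 2 / (1 - ∑ i, mu m ρ i)
          + ∑ i, (x i - mu m ρ i) ^ 2 / mu m ρ i :=
  B_second_deriv_at_zero_general m ρ x hx
end
end

section
/- For every ρ̃ ∈ ℝ^m, every x̃ ∈ ∂Δ, and all indices p, q ∈ {1,…,m}: B_{ρ_p}(s,ρ,x) → −(x̃_p − μ_p(ρ̃)) and B_{ρ_p ρ_q}(s,ρ,x) → δ_{pq} μ_p(ρ̃) − μ_p(ρ̃) μ_q(ρ̃) as (s,ρ,x) → (1,ρ̃,x̃) with (s,ρ,x) ∈ (0,1) × ℝ^m × ∂Δ. In particular, B_{ρ_p} and B_{ρ_p ρ_q} extend continuously from [0,1) × ℝ^m × ∂Δ to [0,1] × ℝ^m × ∂Δ. -/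
/-!
In homogeneous coordinates θ = (0, ρ), x̂ = (1 - Σ xᵢ, x) over Fin (m + 1), μ(ρ) is the softmax
of θ and B(s, ρ, x) = log Σⱼ e^θⱼ + Σᵢ (λᵢ log λᵢ - θᵢ λᵢ) with λ = (1 - s) μ + s x̂, so the
index 0 is no longer special and everything can be done over any finite index set. Every
θ-derivative of λ carries the factor 1 - s, hence
∂ₖB = μₖ - λₖ + Σᵢ ∂ₖμᵢ (1 - s)(log λᵢ + 1 - θᵢ). The only unbounded factor is log λᵢ, and
λᵢ ≥ (1 - s) μᵢ squeezes (1 - s) log λᵢ between (1 - s) log ((1 - s) μᵢ) and (1 - s)(λᵢ - 1),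
both tending to 0. In the second derivative the one new term, (1 - s)² ∂ⱼμᵢ ∂ₖμᵢ / λᵢ, is at most
(1 - s) |∂ₖμᵢ| by the same inequality and |∂ⱼμᵢ| ≤ μᵢ.
-/

open MeasureTheory Real Filter Set

noncomputable section

open Function Topology

section Update

variable {ι : Type*} [DecidableEq ι]

lemma hasDerivAt_update_apply (θ : ι → ℝ) (k i : ι) :
    HasDerivAt (fun r => update θ k r i) (if i = k then 1 else 0) (θ k) := by
  simpa [Pi.single_apply] using hasDerivAt_pi.1 (hasDerivAt_update θ k (θ k)) i

lemma hasDerivAt_exp_update (θ : ι → ℝ) (k i : ι) :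
    HasDerivAt (fun r => exp (update θ k r i)) (exp (θ i) * if i = k then 1 else 0) (θ k) := by
  simpa using (hasDerivAt_update_apply θ k i).exp

end Update

section Softmax

variable {ι : Type*} [Fintype ι]

def softmax (θ : ι → ℝ) (i : ι) : ℝ := exp (θ i) / ∑ j, exp (θ j)

lemma sum_exp_pos [Nonempty ι] (θ : ι → ℝ) : 0 < ∑ j, exp (θ j) :=
  Finset.sum_pos (fun j _ => exp_pos (θ j)) Finset.univ_nonempty

lemma softmax_pos (θ : ι → ℝ) (i : ι) : 0 < softmax θ i :=
  have : Nonempty ι := ⟨i⟩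
  div_pos (exp_pos _) (sum_exp_pos θ)

lemma sum_softmax [Nonempty ι] (θ : ι → ℝ) : ∑ i, softmax θ i = 1 := by
  simp_rw [softmax, ← Finset.sum_div]
  exact div_self (sum_exp_pos θ).ne'

lemma softmax_le_one (θ : ι → ℝ) (i : ι) : softmax θ i ≤ 1 := by
  have : Nonempty ι := ⟨i⟩
  rw [← sum_softmax θ]
  exact Finset.single_le_sum (fun j _ => (softmax_pos θ j).le) (Finset.mem_univ i)

lemma continuous_softmax (i : ι) : Continuous fun θ : ι → ℝ => softmax θ i :=
  have : Nonempty ι := ⟨i⟩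
  (continuous_exp.comp (continuous_apply i)).div
    (continuous_finsetSum _ fun j _ => continuous_exp.comp (continuous_apply j))
    fun θ => (sum_exp_pos θ).ne'

variable [DecidableEq ι]

def softmaxDeriv (θ : ι → ℝ) (k i : ι) : ℝ :=
  softmax θ i * ((if i = k then 1 else 0) - softmax θ k)

lemma abs_softmaxDeriv_le (θ : ι → ℝ) (k i : ι) : |softmaxDeriv θ k i| ≤ softmax θ i := by
  have h0 := softmax_pos θ k
  have h1 := softmax_le_one θ k
  rw [softmaxDeriv, abs_mul, abs_of_pos (softmax_pos θ i)]
  refine mul_le_of_le_one_right (softmax_pos θ i).le (abs_le.2 ⟨?_, ?_⟩) <;>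
    split_ifs <;> linarith

lemma hasDerivAt_sum_exp_update (θ : ι → ℝ) (k : ι) :
    HasDerivAt (fun r => ∑ j, exp (update θ k r j)) (exp (θ k)) (θ k) := by
  simpa using HasDerivAt.fun_sum fun j (_ : j ∈ Finset.univ) => hasDerivAt_exp_update θ k j

lemma hasDerivAt_softmax_update (θ : ι → ℝ) (k i : ι) :
    HasDerivAt (fun r => softmax (update θ k r) i) (softmaxDeriv θ k i) (θ k) := by
  have : Nonempty ι := ⟨i⟩
  refine ((hasDerivAt_exp_update θ k i).fun_div (hasDerivAt_sum_exp_update θ k)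
    (by simpa using (sum_exp_pos θ).ne')).congr_deriv ?_
  simp only [softmaxDeriv, softmax, update_eq_self]
  field_simp

lemma continuous_softmaxDeriv (k i : ι) : Continuous fun θ : ι → ℝ => softmaxDeriv θ k i :=
  (continuous_softmax i).mul (continuous_const.sub (continuous_softmax k))

def softmaxDeriv2 (θ : ι → ℝ) (j k i : ι) : ℝ :=
  softmaxDeriv θ j i * ((if i = k then 1 else 0) - softmax θ k) - softmax θ i * softmaxDeriv θ j k

lemma hasDerivAt_softmaxDeriv_update (θ : ι → ℝ) (j k i : ι) :
    HasDerivAt (fun r => softmaxDeriv (update θ j r) k i) (softmaxDeriv2 θ j k i) (θ j) := by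
  refine ((hasDerivAt_softmax_update θ j i).fun_mul
    ((hasDerivAt_softmax_update θ j k).const_sub (if i = k then (1 : ℝ) else 0))).congr_deriv ?_
  simp only [softmaxDeriv2, update_eq_self]
  ring

lemma continuous_softmaxDeriv2 (j k i : ι) : Continuous fun θ : ι → ℝ => softmaxDeriv2 θ j k i :=
  ((continuous_softmaxDeriv j i).mul (continuous_const.sub (continuous_softmax k))).sub
    ((continuous_softmax i).mul (continuous_softmaxDeriv j k))

end Softmax

section Mixture

variable {ι : Type*} [Fintype ι] {s : ℝ} {x : ι → ℝ}

def mixture (s : ℝ) (θ x : ι → ℝ) (i : ι) : ℝ := (1 - s) * softmax θ i + s * x i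

lemma one_sub_mul_softmax_le_mixture (hs : 0 ≤ s) (hx : 0 ≤ x) (θ : ι → ℝ) (i : ι) :
    (1 - s) * softmax θ i ≤ mixture s θ x i :=
  le_add_of_nonneg_right (mul_nonneg hs (hx i))

lemma mixture_pos (hs0 : 0 ≤ s) (hs1 : s < 1) (hx : 0 ≤ x) (θ : ι → ℝ) (i : ι) :
    0 < mixture s θ x i :=
  (mul_pos (sub_pos.2 hs1) (softmax_pos θ i)).trans_le (one_sub_mul_softmax_le_mixture hs0 hx θ i)

variable [DecidableEq ι]

lemma abs_one_sub_mul_softmaxDeriv_div_mixture_le (hs0 : 0 ≤ s) (hs1 : s < 1)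
    (hx : 0 ≤ x) (θ : ι → ℝ) (j i : ι) :
    |(1 - s) * softmaxDeriv θ j i / mixture s θ x i| ≤ 1 := by
  have hpos := mixture_pos hs0 hs1 hx θ i
  rw [abs_div, abs_of_pos hpos, div_le_one hpos, abs_mul, abs_of_pos (sub_pos.2 hs1)]
  exact (mul_le_mul_of_nonneg_left (abs_softmaxDeriv_le θ j i) (sub_nonneg.2 hs1.le)).trans
    (one_sub_mul_softmax_le_mixture hs0 hx θ i)

lemma hasDerivAt_mixture_update (s : ℝ) (θ x : ι → ℝ) (k i : ι) :
    HasDerivAt (fun r => mixture s (update θ k r) x i) ((1 - s) * softmaxDeriv θ k i) (θ k) :=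
  ((hasDerivAt_softmax_update θ k i).const_mul (1 - s)).add_const (s * x i)

lemma hasDerivAt_log_mixture_update (hs0 : 0 ≤ s) (hs1 : s < 1) (hx : 0 ≤ x) (θ : ι → ℝ)
    (k i : ι) :
    HasDerivAt (fun r => log (mixture s (update θ k r) x i))
      ((1 - s) * softmaxDeriv θ k i / mixture s θ x i) (θ k) := by
  simpa using (hasDerivAt_mixture_update s θ x k i).log
    (by simpa using (mixture_pos hs0 hs1 hx θ i).ne')

def mixtureDivergence (s : ℝ) (θ x : ι → ℝ) : ℝ :=
  log (∑ j, exp (θ j)) + ∑ i, (mixture s θ x i * log (mixture s θ x i) - θ i * mixture s θ x i)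

def mixtureDivergenceDeriv (s : ℝ) (θ x : ι → ℝ) (k : ι) : ℝ :=
  softmax θ k - mixture s θ x k +
    ∑ i, softmaxDeriv θ k i * ((1 - s) * (log (mixture s θ x i) + 1 - θ i))

lemma hasDerivAt_mixtureDivergence_update (hs0 : 0 ≤ s) (hs1 : s < 1) (hx : 0 ≤ x)
    (θ : ι → ℝ) (k : ι) :
    HasDerivAt (fun r => mixtureDivergence s (update θ k r) x)
      (mixtureDivergenceDeriv s θ x k) (θ k) := by
  have : Nonempty ι := ⟨k⟩
  have hlogZ : HasDerivAt (fun r => log (∑ j, exp (update θ k r j))) (softmax θ k) (θ k) := by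
    simpa [softmax] using
      (hasDerivAt_sum_exp_update θ k).log (by simpa using (sum_exp_pos θ).ne')
  have hterm : ∀ i, HasDerivAt
      (fun r => mixture s (update θ k r) x i * log (mixture s (update θ k r) x i) -
        update θ k r i * mixture s (update θ k r) x i)
      (softmaxDeriv θ k i * ((1 - s) * (log (mixture s θ x i) + 1 - θ i)) -
        if i = k then mixture s θ x i else 0) (θ k) := fun i => by
    have hm := hasDerivAt_mixture_update s θ x k i
    refine ((hm.fun_mul (hasDerivAt_log_mixture_update hs0 hs1 hx θ k i)).fun_sub
      ((hasDerivAt_update_apply θ k i).fun_mul hm)).congr_deriv ?_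
    have := (mixture_pos hs0 hs1 hx θ i).ne'
    simp only [update_eq_self]
    field_simp
    split_ifs with hik
    · subst hik; ring
    · ring
  refine (hlogZ.fun_add (HasDerivAt.fun_sum fun i (_ : i ∈ Finset.univ) => hterm i)).congr_deriv ?_
  rw [Finset.sum_sub_distrib, Finset.sum_ite_eq' Finset.univ k, if_pos (Finset.mem_univ k),
    mixtureDivergenceDeriv]
  ring

def mixtureDivergenceDeriv2 (s : ℝ) (θ x : ι → ℝ) (k j : ι) : ℝ :=
  s * softmaxDeriv θ j k +
    ∑ i, (softmaxDeriv2 θ j k i * ((1 - s) * (log (mixture s θ x i) + 1 - θ i)) +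
      (1 - s) * softmaxDeriv θ k i *
        ((1 - s) * softmaxDeriv θ j i / mixture s θ x i - if i = j then 1 else 0))

lemma hasDerivAt_mixtureDivergenceDeriv_update (hs0 : 0 ≤ s) (hs1 : s < 1) (hx : 0 ≤ x)
    (θ : ι → ℝ) (k j : ι) :
    HasDerivAt (fun r => mixtureDivergenceDeriv s (update θ j r) x k)
      (mixtureDivergenceDeriv2 s θ x k j) (θ j) := by
  have hterm : ∀ i, HasDerivAt
      (fun r => softmaxDeriv (update θ j r) k i *
        ((1 - s) * (log (mixture s (update θ j r) x i) + 1 - update θ j r i)))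
      (softmaxDeriv2 θ j k i * ((1 - s) * (log (mixture s θ x i) + 1 - θ i)) +
        (1 - s) * softmaxDeriv θ k i *
          ((1 - s) * softmaxDeriv θ j i / mixture s θ x i - if i = j then 1 else 0)) (θ j) :=
    fun i => by
      refine ((hasDerivAt_softmaxDeriv_update θ j k i).fun_mul
        ((((hasDerivAt_log_mixture_update hs0 hs1 hx θ j i).add_const 1).fun_sub
          (hasDerivAt_update_apply θ j i)).const_mul (1 - s))).congr_deriv ?_
      simp only [update_eq_self]
      ring
  refine (((hasDerivAt_softmax_update θ j k).fun_sub (hasDerivAt_mixture_update s θ x j k)).fun_add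
    (HasDerivAt.fun_sum fun i (_ : i ∈ Finset.univ) => hterm i)).congr_deriv ?_
  rw [mixtureDivergenceDeriv2]
  ring

end Mixture

lemma tendsto_mul_log_of_mul_le {α : Type*} {l : Filter α} {t a y : α → ℝ} {a₀ y₀ : ℝ}
    (ht : Tendsto t l (𝓝 0)) (ha : Tendsto a l (𝓝 a₀)) (ha₀ : 0 < a₀) (hy : Tendsto y l (𝓝 y₀))
    (ht_pos : ∀ᶠ w in l, 0 < t w) (hle : ∀ᶠ w in l, t w * a w ≤ y w) :
    Tendsto (fun w => t w * log (y w)) l (𝓝 0) := by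
  have hlower : Tendsto (fun w => t w * log (t w) + t w * log (a w)) l (𝓝 0) := by
    simpa using ((continuous_mul_log.tendsto 0).comp ht).add (ht.mul (ha.log ha₀.ne'))
  have hupper : Tendsto (fun w => t w * (y w - 1)) l (𝓝 0) := by
    simpa using ht.mul (hy.sub_const 1)
  have ha_pos : ∀ᶠ w in l, 0 < a w := ha.eventually (lt_mem_nhds ha₀)
  refine tendsto_of_tendsto_of_tendsto_of_le_of_le' hlower hupper ?_ ?_
  · filter_upwards [ht_pos, ha_pos, hle] with w ht ha hle
    rw [← mul_add, ← log_mul ht.ne' ha.ne']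
    exact mul_le_mul_of_nonneg_left (log_le_log (mul_pos ht ha) hle) ht.le
  · filter_upwards [ht_pos, ha_pos, hle] with w ht ha hle
    exact mul_le_mul_of_nonneg_left (log_le_sub_one_of_pos ((mul_pos ht ha).trans_le hle)) ht.le

lemma eventually_nonneg_lt_one_of_tendsto_nhdsLT {α : Type*} {l : Filter α} {s : α → ℝ}
    (hs : Tendsto s l (𝓝[<] 1)) : ∀ᶠ w in l, 0 ≤ s w ∧ s w < 1 :=
  ((tendsto_nhds_of_tendsto_nhdsWithin hs).eventually (lt_mem_nhds zero_lt_one)).and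
    (eventually_mem_of_tendsto_nhdsWithin hs) |>.mono fun _ h => ⟨h.1.le, h.2⟩

section Limits

variable {ι : Type*} [Fintype ι] {α : Type*} {l : Filter α} {s : α → ℝ} {θ x : α → ι → ℝ}
  {θ₀ x₀ : ι → ℝ}

lemma tendsto_mixture (hs : Tendsto s l (𝓝 1)) (hθ : Tendsto θ l (𝓝 θ₀))
    (hx : Tendsto x l (𝓝 x₀)) (i : ι) :
    Tendsto (fun w => mixture (s w) (θ w) (x w) i) l (𝓝 (x₀ i)) := by
  have := (((tendsto_const_nhds (x := (1 : ℝ))).sub hs).mul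
    ((continuous_softmax i).tendsto θ₀ |>.comp hθ)).add (hs.mul (tendsto_pi_nhds.1 hx i))
  rwa [sub_self, zero_mul, one_mul, zero_add] at this

lemma tendsto_one_sub_mul_log_mixture_add_one_sub (hs : Tendsto s l (𝓝[<] 1))
    (hθ : Tendsto θ l (𝓝 θ₀)) (hx : Tendsto x l (𝓝 x₀)) (hx0 : ∀ᶠ w in l, 0 ≤ x w) (i : ι) :
    Tendsto (fun w => (1 - s w) * (log (mixture (s w) (θ w) (x w) i) + 1 - θ w i)) l (𝓝 0) := by
  have hs' := tendsto_nhds_of_tendsto_nhdsWithin hs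
  have hs01 := eventually_nonneg_lt_one_of_tendsto_nhdsLT hs
  have ht : Tendsto (fun w => 1 - s w) l (𝓝 0) := by
    simpa using (tendsto_const_nhds (x := (1 : ℝ))).sub hs'
  have hlog := tendsto_mul_log_of_mul_le ht ((continuous_softmax i).tendsto θ₀ |>.comp hθ)
    (softmax_pos θ₀ i) (tendsto_mixture hs' hθ hx i) (hs01.mono fun _ h => sub_pos.2 h.2)
    (hs01.and hx0 |>.mono fun w h => one_sub_mul_softmax_le_mixture h.1.1 h.2 (θ w) i)
  have := hlog.add (ht.mul ((tendsto_const_nhds (x := (1 : ℝ))).sub (tendsto_pi_nhds.1 hθ i)))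
  rw [zero_mul, add_zero] at this
  exact this.congr fun w => by ring

variable [DecidableEq ι]

lemma tendsto_mixtureDivergenceDeriv (hs : Tendsto s l (𝓝[<] 1)) (hθ : Tendsto θ l (𝓝 θ₀))
    (hx : Tendsto x l (𝓝 x₀)) (hx0 : ∀ᶠ w in l, 0 ≤ x w) (k : ι) :
    Tendsto (fun w => mixtureDivergenceDeriv (s w) (θ w) (x w) k) l
      (𝓝 (softmax θ₀ k - x₀ k)) := by
  unfold mixtureDivergenceDeriv
  simpa using (((continuous_softmax k).tendsto θ₀ |>.comp hθ).sub
    (tendsto_mixture (tendsto_nhds_of_tendsto_nhdsWithin hs) hθ hx k)).add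
    (tendsto_finsetSum _ fun i _ => ((continuous_softmaxDeriv k i).tendsto θ₀ |>.comp hθ).mul
      (tendsto_one_sub_mul_log_mixture_add_one_sub hs hθ hx hx0 i))

lemma tendsto_mixtureDivergenceDeriv2 (hs : Tendsto s l (𝓝[<] 1)) (hθ : Tendsto θ l (𝓝 θ₀))
    (hx : Tendsto x l (𝓝 x₀)) (hx0 : ∀ᶠ w in l, 0 ≤ x w) (k j : ι) :
    Tendsto (fun w => mixtureDivergenceDeriv2 (s w) (θ w) (x w) k j) l
      (𝓝 (softmaxDeriv θ₀ j k)) := by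
  have hs' := tendsto_nhds_of_tendsto_nhdsWithin hs
  have hsD (i : ι) : Tendsto (fun w => (1 - s w) * softmaxDeriv (θ w) k i) l (𝓝 0) := by
    simpa using ((tendsto_const_nhds (x := (1 : ℝ))).sub hs').mul
      ((continuous_softmaxDeriv k i).tendsto θ₀ |>.comp hθ)
  have hbdd (i : ι) : ∀ᶠ w in l, ‖(1 - s w) * softmaxDeriv (θ w) j i /
      mixture (s w) (θ w) (x w) i - if i = j then 1 else 0‖ ≤ 2 := by
    filter_upwards [eventually_nonneg_lt_one_of_tendsto_nhdsLT hs, hx0] with w hsw hxw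
    refine (norm_sub_le _ _).trans ?_
    have := abs_one_sub_mul_softmaxDeriv_div_mixture_le hsw.1 hsw.2 hxw (θ w) j i
    rw [Real.norm_eq_abs, Real.norm_eq_abs]
    split_ifs <;> norm_num <;> linarith
  unfold mixtureDivergenceDeriv2
  simpa using (hs'.mul ((continuous_softmaxDeriv j k).tendsto θ₀ |>.comp hθ)).add
    (tendsto_finsetSum _ fun i _ =>
      (((continuous_softmaxDeriv2 j k i).tendsto θ₀ |>.comp hθ).mul
        (tendsto_one_sub_mul_log_mixture_add_one_sub hs hθ hx hx0 i)).add
      ((hsD i).zero_mul_isBoundedUnder_le (isBoundedUnder_of_eventually_le (hbdd i))))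

end Limits

section Chart

variable {m : ℕ}

lemma isClosed_simplex (m : ℕ) : IsClosed (simplex m) := by
  simp only [simplex, ofPred_and, ofPred_forall]
  exact (isClosed_iInter fun i => isClosed_le continuous_const (continuous_apply i)).inter
    (isClosed_le (continuous_finsetSum _ fun i _ => continuous_apply i) continuous_const)

lemma cons_nonneg_of_mem_simplex {x : Fin m → ℝ} (hx : x ∈ simplex m) :
    0 ≤ (Fin.cons (1 - ∑ i, x i) x : Fin (m + 1) → ℝ) :=
  fun j => Fin.cases (sub_nonneg.2 hx.2) hx.1 j

lemma sum_exp_cons_zero (ρ : Fin m → ℝ) :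
    ∑ j, exp ((Fin.cons 0 ρ : Fin (m + 1) → ℝ) j) = 1 + ∑ j, exp (ρ j) := by
  simp [Fin.sum_univ_succ]

lemma softmax_cons_zero_succ (ρ : Fin m → ℝ) (i : Fin m) :
    softmax (Fin.cons 0 ρ : Fin (m + 1) → ℝ) i.succ = mu m ρ i := by
  rw [softmax, sum_exp_cons_zero, Fin.cons_succ, mu]

lemma softmaxDeriv_cons_zero_succ (ρ : Fin m → ℝ) (p q : Fin m) :
    softmaxDeriv (Fin.cons 0 ρ : Fin (m + 1) → ℝ) q.succ p.succ =
      (if p = q then mu m ρ p else 0) - mu m ρ p * mu m ρ q := by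
  simp only [softmaxDeriv, softmax_cons_zero_succ, Fin.succ_inj]
  split_ifs <;> ring

lemma mixture_cons_zero (s : ℝ) (ρ x : Fin m → ℝ) :
    mixture s (Fin.cons 0 ρ) (Fin.cons (1 - ∑ i, x i) x) =
      (Fin.cons (1 - ∑ i, ((1 - s) * mu m ρ i + s * x i))
        (fun i => (1 - s) * mu m ρ i + s * x i) : Fin (m + 1) → ℝ) := by
  ext j
  refine Fin.cases ?_ (fun i => ?_) j
  · have := sum_softmax (Fin.cons 0 ρ : Fin (m + 1) → ℝ)
    rw [Fin.sum_univ_succ] at this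
    simp only [softmax_cons_zero_succ] at this
    simp only [mixture, Fin.cons_zero, Finset.sum_add_distrib, ← Finset.mul_sum]
    linear_combination (1 - s) * this
  · simp [mixture, softmax_cons_zero_succ]

lemma Bfun_eq_mixtureDivergence (s : ℝ) (ρ x : Fin m → ℝ) :
    Bfun m s ρ x = mixtureDivergence s (Fin.cons 0 ρ) (Fin.cons (1 - ∑ i, x i) x) := by
  rw [mixtureDivergence, mixture_cons_zero, sum_exp_cons_zero, Fin.sum_univ_succ]
  simp only [Bfun, bfun, ent, Fin.cons_zero, zero_mul, sub_zero, Fin.cons_succ,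
    Finset.sum_sub_distrib]
  ring

lemma pderivR_Bfun {s : ℝ} (hs0 : 0 ≤ s) (hs1 : s < 1) {x : Fin m → ℝ} (hx : x ∈ simplex m)
    (ρ : Fin m → ℝ) (p : Fin m) :
    pderivR m p (fun ρ' => Bfun m s ρ' x) ρ =
      mixtureDivergenceDeriv s (Fin.cons 0 ρ) (Fin.cons (1 - ∑ i, x i) x) p.succ := by
  have h := (hasDerivAt_mixtureDivergence_update hs0 hs1 (cons_nonneg_of_mem_simplex hx)
    (Fin.cons 0 ρ) p.succ).deriv
  simp only [pderivR, Bfun_eq_mixtureDivergence, Fin.cons_update]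
  simpa only [Fin.cons_succ] using h

lemma pderivR_pderivR_Bfun {s : ℝ} (hs0 : 0 ≤ s) (hs1 : s < 1) {x : Fin m → ℝ}
    (hx : x ∈ simplex m) (ρ : Fin m → ℝ) (p q : Fin m) :
    pderivR m q (fun ρ' => pderivR m p (fun ρ'' => Bfun m s ρ'' x) ρ') ρ =
      mixtureDivergenceDeriv2 s (Fin.cons 0 ρ) (Fin.cons (1 - ∑ i, x i) x) p.succ q.succ := by
  have h := (hasDerivAt_mixtureDivergenceDeriv_update hs0 hs1 (cons_nonneg_of_mem_simplex hx)
    (Fin.cons 0 ρ) p.succ q.succ).deriv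
  simp only [pderivR_Bfun hs0 hs1 hx]
  simp only [pderivR, Fin.cons_update]
  simpa only [Fin.cons_succ] using h

end Chart

theorem B_rho_derivs_tendsto_at_one_general (m : ℕ) (ρt : Fin m → ℝ)
    (xt : Fin m → ℝ) (p q : Fin m) :
    Filter.Tendsto (fun w : ℝ × (Fin m → ℝ) × (Fin m → ℝ) =>
        pderivR m p (fun ρ' => Bfun m w.1 ρ' w.2.2) w.2.1)
      (nhdsWithin (1, ρt, xt)
        (Set.Ioo (0 : ℝ) 1 ×ˢ ((Set.univ : Set (Fin m → ℝ)) ×ˢ frontier (simplex m))))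
      (nhds (-(xt p - mu m ρt p))) ∧
    Filter.Tendsto (fun w : ℝ × (Fin m → ℝ) × (Fin m → ℝ) =>
        pderivR m q (fun ρ' => pderivR m p (fun ρ'' => Bfun m w.1 ρ'' w.2.2) ρ') w.2.1)
      (nhdsWithin (1, ρt, xt)
        (Set.Ioo (0 : ℝ) 1 ×ˢ ((Set.univ : Set (Fin m → ℝ)) ×ˢ frontier (simplex m))))
      (nhds ((if p = q then mu m ρt p else 0) - mu m ρt p * mu m ρt q)) := by
  set L := 𝓝[Ioo (0 : ℝ) 1 ×ˢ ((univ : Set (Fin m → ℝ)) ×ˢ frontier (simplex m))] (1, ρt, xt)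
  have hdom : ∀ᶠ w in L, w.1 ∈ Ioo 0 1 ∧ w.2.2 ∈ simplex m :=
    eventually_mem_nhdsWithin.mono fun w hw =>
      ⟨hw.1, (isClosed_simplex m).frontier_subset hw.2.2⟩
  have hs : Tendsto (fun w => w.1) L (𝓝[<] 1) :=
    tendsto_nhdsWithin_iff.2 ⟨(continuous_fst.tendsto _).mono_left nhdsWithin_le_nhds,
      hdom.mono fun w hw => hw.1.2⟩
  have hρ : Tendsto (fun w => w.2.1) L (𝓝 ρt) :=
    ((continuous_fst.comp continuous_snd).tendsto _).mono_left nhdsWithin_le_nhds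
  have hxw : Tendsto (fun w => w.2.2) L (𝓝 xt) :=
    ((continuous_snd.comp continuous_snd).tendsto _).mono_left nhdsWithin_le_nhds
  have hθ := Tendsto.finCons (A := fun _ => ℝ) (tendsto_const_nhds (x := 0)) hρ
  have hxhat := Tendsto.finCons (A := fun _ => ℝ) ((tendsto_const_nhds (x := 1)).sub
    (tendsto_finsetSum Finset.univ fun i _ => tendsto_pi_nhds.1 hxw i)) hxw
  have hxhat0 := hdom.mono fun w hw => cons_nonneg_of_mem_simplex hw.2
  constructor
  · rw [neg_sub, ← softmax_cons_zero_succ, ← Fin.cons_succ (α := fun _ => ℝ) (1 - ∑ i, xt i) xt p]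
    exact (tendsto_mixtureDivergenceDeriv hs hθ hxhat hxhat0 p.succ).congr'
      (hdom.mono fun w hw => (pderivR_Bfun hw.1.1.le hw.1.2 hw.2 w.2.1 p).symm)
  · rw [← softmaxDeriv_cons_zero_succ]
    exact (tendsto_mixtureDivergenceDeriv2 hs hθ hxhat hxhat0 p.succ q.succ).congr'
      (hdom.mono fun w hw => (pderivR_pderivR_Bfun hw.1.1.le hw.1.2 hw.2 w.2.1 p q).symm)

/-- B_{ρ_p} → −(x̃_p − μ_p(ρ̃)) and B_{ρ_p ρ_q} → δ_{pq}μ_p(ρ̃) − μ_p(ρ̃)μ_q(ρ̃)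
as (s,ρ,x) → (1,ρ̃,x̃) in (0,1) × ℝ^m × ∂Δ. -/
theorem B_rho_derivs_tendsto_at_one (m : ℕ) (hm : 1 ≤ m) (ρt : Fin m → ℝ)
    (xt : Fin m → ℝ) (hxt : xt ∈ frontier (simplex m)) (p q : Fin m) :
    Filter.Tendsto (fun w : ℝ × (Fin m → ℝ) × (Fin m → ℝ) =>
        pderivR m p (fun ρ' => Bfun m w.1 ρ' w.2.2) w.2.1)
      (nhdsWithin (1, ρt, xt)
        (Set.Ioo (0 : ℝ) 1 ×ˢ ((Set.univ : Set (Fin m → ℝ)) ×ˢ frontier (simplex m))))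
      (nhds (-(xt p - mu m ρt p))) ∧
    Filter.Tendsto (fun w : ℝ × (Fin m → ℝ) × (Fin m → ℝ) =>
        pderivR m q (fun ρ' => pderivR m p (fun ρ'' => Bfun m w.1 ρ'' w.2.2) ρ') w.2.1)
      (nhdsWithin (1, ρt, xt)
        (Set.Ioo (0 : ℝ) 1 ×ˢ ((Set.univ : Set (Fin m → ℝ)) ×ˢ frontier (simplex m))))
      (nhds ((if p = q then mu m ρt p else 0) - mu m ρt p * mu m ρt q)) :=
  B_rho_derivs_tendsto_at_one_general m ρt xt p q
end
end

section
/- Let m = 1. For every ρ̃ ∈ ℝ and every x ∈ {0,1}, the product D_t(B(s,ρ,x),ρ) · B_ρ(s,ρ,x) tends to 0 as (s,ρ) → (0⁺,ρ̃), where D_t denotes the partial derivative of D in t and B_ρ the partial derivative of B in ρ. Consequently, the function (s,ρ,x) ↦ D_t(B(s,ρ,x),ρ)·B_ρ(s,ρ,x), defined for s ∈ (0,1), extends continuously to s = 0 with value 0. -/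
open MeasureTheory Real Filter Set

noncomputable section

/-- m = 1: μ(ρ) = e^ρ/(1+e^ρ). -/
def mu1 (ρ : ℝ) : ℝ := Real.exp ρ / (1 + Real.exp ρ)

/-- m = 1: b(λ,ρ) = λ log λ + (1−λ) log(1−λ) − λρ + log(1+e^ρ).
Note `Real.log 0 = 0`, so the convention 0·log 0 = 0 holds. -/
def b1 (l ρ : ℝ) : ℝ :=
  l * Real.log l + (1 - l) * Real.log (1 - l) - l * ρ + Real.log (1 + Real.exp ρ)

/-- m = 1: B(s,ρ,x) = b((1−s)μ(ρ) + s x, ρ). -/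
def B1 (s ρ x : ℝ) : ℝ := b1 ((1 - s) * mu1 ρ + s * x) ρ

/-- m = 1: D(t,ρ) = vol({λ ∈ [0,1] : b(λ,ρ) ≤ t}). -/
def D1 (t ρ : ℝ) : ℝ := (volume {l ∈ Set.Icc (0 : ℝ) 1 | b1 l ρ ≤ t}).toReal

/-!
`b(·, ρ)` is the Kullback–Leibler divergence of Bernoulli(`λ`) from Bernoulli(`μ(ρ)`), so Pinsker's
inequality `2 (λ - μ)² ≤ b` holds. Since `b(·, ρ)` is convex, its sublevel sets are intervals, of
length `D(t, ρ) ≤ 2 √(t/2)` by Pinsker, and `t ↦ D(t, ρ)` is concave; hence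
`0 ≤ D_t(t, ρ) ≤ D(t, ρ) / t ≤ (√(t/2))⁻¹`. Along `λ = (1 - s) μ + s x` Pinsker gives
`B ≥ 2 s² (x - μ)²`, so `D_t(B, ρ) = O(1/s)` as long as `x ≠ μ(ρ̃)`. On the other hand
`B_ρ = (1 - s) μ (1 - μ) (logit λ - logit μ) - s (x - μ)`, and as `logit' μ = (μ (1 - μ))⁻¹` the two
terms cancel to first order in `s`: `B_ρ = o(s)`.
-/

open Asymptotics Topology

lemma mu1_eq_sigmoid : mu1 = sigmoid := by
  ext ρ
  rw [mu1, sigmoid_def, exp_neg]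
  field_simp
  ring

lemma mu1_mem_Ioo (ρ : ℝ) : mu1 ρ ∈ Ioo 0 1 := by
  rw [mu1_eq_sigmoid]; exact ⟨sigmoid_pos ρ, sigmoid_lt_one ρ⟩

lemma hasDerivAt_mu1 (ρ : ℝ) : HasDerivAt mu1 (mu1 ρ * (1 - mu1 ρ)) ρ := by
  rw [mu1_eq_sigmoid]; exact hasDerivAt_sigmoid ρ

lemma hasDerivAt_log_one_add_exp (ρ : ℝ) :
    HasDerivAt (fun r => log (1 + exp r)) (mu1 ρ) ρ := by
  refine (((hasDerivAt_exp ρ).const_add 1).log (by positivity)).congr_deriv ?_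
  rw [mu1, div_eq_inv_mul]

lemma log_mu1 (ρ : ℝ) : log (mu1 ρ) = ρ - log (1 + exp ρ) := by
  rw [mu1, log_div (exp_ne_zero ρ) (by positivity), log_exp]

lemma log_one_sub_mu1 (ρ : ℝ) : log (1 - mu1 ρ) = -log (1 + exp ρ) := by
  have h : 1 - mu1 ρ = (1 + exp ρ)⁻¹ := by
    rw [mu1]; field_simp; ring
  rw [h, log_inv]

lemma b1_mu1 (ρ : ℝ) : b1 (mu1 ρ) ρ = 0 := by
  rw [b1, log_mu1, log_one_sub_mu1]; ring

def logit (u : ℝ) : ℝ := log u - log (1 - u)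

lemma logit_mu1 (ρ : ℝ) : logit (mu1 ρ) = ρ := by
  rw [logit, log_mu1, log_one_sub_mu1]; ring

lemma hasStrictDerivAt_logit {u : ℝ} (hu : u ∈ Ioo 0 1) :
    HasStrictDerivAt logit (u⁻¹ + (1 - u)⁻¹) u := by
  have h1 := ((hasStrictDerivAt_id u).const_sub 1).log (sub_ne_zero.2 hu.2.ne')
  exact ((hasStrictDerivAt_log hu.1.ne').sub h1).congr_deriv (by simp [div_eq_mul_inv])

lemma monotoneOn_logit_sub_four_mul : MonotoneOn (fun u => logit u - 4 * u) (Ioo 0 1) := by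
  have hderiv : ∀ u ∈ Ioo (0 : ℝ) 1,
      HasDerivAt (fun u => logit u - 4 * u) ((1 - 2 * u) ^ 2 / (u * (1 - u))) u := by
    intro u hu
    have hu0 : u ≠ 0 := hu.1.ne'
    have hu1 : 1 - u ≠ 0 := by linarith [hu.2]
    refine ((hasStrictDerivAt_logit hu).hasDerivAt.sub
      ((hasDerivAt_id u).const_mul 4)).congr_deriv ?_
    field_simp
    ring
  refine monotoneOn_of_deriv_nonneg (convex_Ioo 0 1)
    (fun u hu => (hderiv u hu).continuousAt.continuousWithinAt)
    (fun u hu => (hderiv u (interior_subset hu)).differentiableAt.differentiableWithinAt)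
    (fun u hu => ?_)
  rw [interior_Ioo] at hu
  rw [(hderiv u hu).deriv]
  exact div_nonneg (sq_nonneg _) (mul_pos hu.1 (by linarith [hu.2])).le

lemma b1_eq_neg_binEntropy (l ρ : ℝ) : b1 l ρ = -binEntropy l - l * ρ + log (1 + exp ρ) := by
  rw [b1, binEntropy, log_inv, log_inv]; ring

lemma continuous_b1 (ρ : ℝ) : Continuous fun l => b1 l ρ := by
  simp_rw [b1_eq_neg_binEntropy]; fun_prop

lemma hasDerivAt_b1 (ρ : ℝ) {l : ℝ} (hl : l ∈ Ioo 0 1) :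
    HasDerivAt (fun l => b1 l ρ) (logit l - ρ) l := by
  simp_rw [b1_eq_neg_binEntropy]
  refine (((hasDerivAt_binEntropy hl.1.ne' hl.2.ne).neg.sub
    ((hasDerivAt_id l).mul_const ρ)).add_const _).congr_deriv ?_
  rw [logit]; simp

lemma convexOn_b1 (ρ : ℝ) : ConvexOn ℝ (Icc 0 1) fun l => b1 l ρ :=
  ((strictConcave_binEntropy.concaveOn.neg.sub
    ((LinearMap.id.smulRight ρ : ℝ →ₗ[ℝ] ℝ).concaveOn (convex_Icc 0 1))).add_const
    (log (1 + exp ρ))).congr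
    fun l _ => by simp [b1_eq_neg_binEntropy]

lemma hasDerivAt_b1_sub_sq (ρ : ℝ) {l : ℝ} (hl : l ∈ Ioo 0 1) :
    HasDerivAt (fun l => b1 l ρ - 2 * (l - mu1 ρ) ^ 2) (logit l - 4 * l + (4 * mu1 ρ - ρ)) l := by
  refine ((hasDerivAt_b1 ρ hl).sub
    ((((hasDerivAt_id l).sub_const (mu1 ρ)).pow 2).const_mul 2)).congr_deriv ?_
  simp only [Nat.cast_ofNat, id_eq, Nat.add_one_sub_one, pow_one, mul_one]
  ring

lemma convexOn_b1_sub_sq (ρ : ℝ) :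
    ConvexOn ℝ (Icc 0 1) (fun l => b1 l ρ - 2 * (l - mu1 ρ) ^ 2) := by
  refine MonotoneOn.convexOn_of_deriv (convex_Icc 0 1)
    ((continuous_b1 ρ).sub (by fun_prop)).continuousOn ?_ ?_
  · rw [interior_Icc]
    exact fun l hl => (hasDerivAt_b1_sub_sq ρ hl).differentiableAt.differentiableWithinAt
  · rw [interior_Icc]
    intro a ha b hb hab
    rw [(hasDerivAt_b1_sub_sq ρ ha).deriv, (hasDerivAt_b1_sub_sq ρ hb).deriv]
    simpa using monotoneOn_logit_sub_four_mul ha hb hab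

lemma two_mul_sq_le_b1 (ρ : ℝ) {l : ℝ} (hl : l ∈ Icc 0 1) : 2 * (l - mu1 ρ) ^ 2 ≤ b1 l ρ := by
  have hμ := mu1_mem_Ioo ρ
  have hderiv := (hasDerivAt_b1_sub_sq ρ hμ).hasDerivWithinAt (s := Ioi (mu1 ρ))
  rw [logit_mu1] at hderiv
  have hmin : IsMinOn (fun l => b1 l ρ - 2 * (l - mu1 ρ) ^ 2) (Icc 0 1) (mu1 ρ) :=
    (convexOn_b1_sub_sq ρ).isMinOn_of_rightDeriv_eq_zero (by rwa [interior_Icc])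
      ((hderiv.congr_deriv (by ring)).derivWithin (uniqueDiffWithinAt_Ioi _))
  simpa [b1_mu1] using hmin hl

section Sublevel

variable {f : ℝ → ℝ} {a b : ℝ}

lemma isCompact_sublevel (hf : ContinuousOn f (Icc a b)) (t : ℝ) :
    IsCompact {l ∈ Icc a b | f l ≤ t} :=
  isCompact_Icc.of_isClosed_subset
    (hf.preimage_isClosed_of_isClosed isClosed_Icc isClosed_Iic) fun _ hl => hl.1

lemma toReal_volume_sublevel_eq (hconv : ConvexOn ℝ (Icc a b) f) (hf : ContinuousOn f (Icc a b))
    {t : ℝ} (hne : {l ∈ Icc a b | f l ≤ t}.Nonempty) :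
    (volume {l ∈ Icc a b | f l ≤ t}).toReal =
      sSup {l ∈ Icc a b | f l ≤ t} - sInf {l ∈ Icc a b | f l ≤ t} := by
  have hK := isCompact_sublevel hf t
  rw [eq_Icc_of_connected_compact ((hconv.convex_le t).isConnected hne) hK, Real.volume_Icc,
    ← eq_Icc_of_connected_compact ((hconv.convex_le t).isConnected hne) hK,
    ENNReal.toReal_ofReal (sub_nonneg.2 (csInf_le_csSup hne hK.bddBelow hK.bddAbove))]

lemma monotone_toReal_volume_sublevel :
    Monotone fun t => (volume {l ∈ Icc a b | f l ≤ t}).toReal := fun _ _ hst =>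
  ENNReal.toReal_mono (measure_ne_top_of_subset (fun _ hl => hl.1) (by simp))
    (measure_mono fun _ hl => ⟨hl.1, hl.2.trans hst⟩)

lemma concaveOn_toReal_volume_sublevel (hconv : ConvexOn ℝ (Icc a b) f)
    (hf : ContinuousOn f (Icc a b)) {c : ℝ} (hc : c ∈ Icc a b) :
    ConcaveOn ℝ (Ici (f c)) fun t => (volume {l ∈ Icc a b | f l ≤ t}).toReal := by
  refine ⟨convex_Ici _, fun t₁ ht₁ t₂ ht₂ θ₁ θ₂ hθ₁ hθ₂ hθ => ?_⟩
  set S : ℝ → Set ℝ := fun t => {l ∈ Icc a b | f l ≤ t}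
  have hne : ∀ t ∈ Ici (f c), (S t).Nonempty := fun t ht => ⟨c, hc, ht⟩
  have hcomb : ∀ u ∈ S t₁, ∀ v ∈ S t₂, θ₁ * u + θ₂ * v ∈ S (θ₁ * t₁ + θ₂ * t₂) := by
    intro u hu v hv
    refine ⟨(convex_Icc a b) hu.1 hv.1 hθ₁ hθ₂ hθ, (hconv.2 hu.1 hv.1 hθ₁ hθ₂ hθ).trans ?_⟩
    simp only [smul_eq_mul]
    gcongr
    exacts [hu.2, hv.2]
  have ht : θ₁ * t₁ + θ₂ * t₂ ∈ Ici (f c) := (convex_Ici (f c)) ht₁ ht₂ hθ₁ hθ₂ hθ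
  have hK := fun t => isCompact_sublevel hf t
  simp only [smul_eq_mul]
  rw [toReal_volume_sublevel_eq hconv hf (hne _ ht₁),
    toReal_volume_sublevel_eq hconv hf (hne _ ht₂), toReal_volume_sublevel_eq hconv hf (hne _ ht)]
  have hsup := le_csSup (hK _).bddAbove
    (hcomb _ ((hK t₁).sSup_mem (hne _ ht₁)) _ ((hK t₂).sSup_mem (hne _ ht₂)))
  have hinf := csInf_le (hK _).bddBelow
    (hcomb _ ((hK t₁).sInf_mem (hne _ ht₁)) _ ((hK t₂).sInf_mem (hne _ ht₂)))
  linarith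

end Sublevel

lemma concaveOn_D1 (ρ : ℝ) : ConcaveOn ℝ (Ici 0) fun t => D1 t ρ := by
  have := concaveOn_toReal_volume_sublevel (convexOn_b1 ρ) (continuous_b1 ρ).continuousOn
    (Ioo_subset_Icc_self (mu1_mem_Ioo ρ))
  rwa [b1_mu1] at this

lemma monotone_D1 (ρ : ℝ) : Monotone fun t => D1 t ρ :=
  monotone_toReal_volume_sublevel

lemma D1_le (ρ t : ℝ) : D1 t ρ ≤ 2 * √(t / 2) := by
  have hsub : {l ∈ Icc (0 : ℝ) 1 | b1 l ρ ≤ t} ⊆ Icc (mu1 ρ - √(t / 2)) (mu1 ρ + √(t / 2)) := by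
    intro l hl
    have h : |l - mu1 ρ| ≤ √(t / 2) :=
      abs_le_sqrt (by linarith [two_mul_sq_le_b1 ρ hl.1, hl.2])
    constructor <;> linarith [abs_le.1 h]
  calc D1 t ρ ≤ (volume (Icc (mu1 ρ - √(t / 2)) (mu1 ρ + √(t / 2)))).toReal :=
        ENNReal.toReal_mono (by simp) (measure_mono hsub)
    _ = 2 * √(t / 2) := by
        rw [Real.volume_Icc, ENNReal.toReal_ofReal (by linarith [sqrt_nonneg (t / 2)])]; ring

lemma le_inv_sqrt_of_hasDerivAt_D1 {ρ t d : ℝ} (ht : 0 < t)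
    (hd : HasDerivAt (fun t' => D1 t' ρ) d t) : d ≤ (√(t / 2))⁻¹ := by
  calc d ≤ slope (fun t' => D1 t' ρ) 0 t :=
        (concaveOn_D1 ρ).le_slope_of_hasDerivAt self_mem_Ici ht.le ht hd
    _ ≤ D1 t ρ / t := by
        rw [slope_def_field, sub_zero]
        gcongr
        have : 0 ≤ D1 0 ρ := ENNReal.toReal_nonneg
        linarith
    _ ≤ 2 * √(t / 2) / t := by gcongr; exact D1_le ρ t
    _ = (√(t / 2))⁻¹ := by
        field_simp
        nlinarith [sq_sqrt (show 0 ≤ t / 2 by positivity)]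

def lam1 (s ρ x : ℝ) : ℝ := (1 - s) * mu1 ρ + s * x

lemma B1_eq (s ρ x : ℝ) : B1 s ρ x = b1 (lam1 s ρ x) ρ := rfl

lemma lam1_sub_mu1 (s ρ x : ℝ) : lam1 s ρ x - mu1 ρ = s * (x - mu1 ρ) := by
  rw [lam1]; ring

lemma lam1_mem_Ioo {s x : ℝ} (hs₀ : 0 ≤ s) (hs₁ : s < 1) (hx : x ∈ Icc 0 1) (ρ : ℝ) :
    lam1 s ρ x ∈ Ioo 0 1 := by
  obtain ⟨hμ₀, hμ₁⟩ := mu1_mem_Ioo ρ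
  constructor <;> rw [lam1] <;> nlinarith [hx.1, hx.2]

lemma two_mul_sq_le_B1 {s x : ℝ} (hs : s ∈ Icc 0 1) (hx : x ∈ Icc 0 1) (ρ : ℝ) :
    2 * (s * (x - mu1 ρ)) ^ 2 ≤ B1 s ρ x := by
  have hl : lam1 s ρ x ∈ Icc 0 1 :=
    convex_Icc 0 1 (Ioo_subset_Icc_self (mu1_mem_Ioo ρ)) hx (by linarith [hs.2]) hs.1 (by ring)
  simpa [B1_eq, lam1_sub_mu1] using two_mul_sq_le_b1 ρ hl

lemma hasDerivAt_B1 {s x : ℝ} (hs₀ : 0 ≤ s) (hs₁ : s < 1) (hx : x ∈ Icc 0 1) (ρ : ℝ) :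
    HasDerivAt (fun r => B1 s r x)
      ((1 - s) * (mu1 ρ * (1 - mu1 ρ)) * (logit (lam1 s ρ x) - logit (mu1 ρ))
        - s * (x - mu1 ρ)) ρ := by
  have hL : HasDerivAt (fun r => lam1 s r x) ((1 - s) * (mu1 ρ * (1 - mu1 ρ))) ρ :=
    ((hasDerivAt_mu1 ρ).const_mul (1 - s)).add_const (s * x)
  obtain ⟨hl₀, hl₁⟩ := lam1_mem_Ioo hs₀ hs₁ hx ρ
  simp_rw [B1_eq, b1_eq_neg_binEntropy]
  refine (((((hasDerivAt_binEntropy hl₀.ne' hl₁.ne).comp ρ hL).neg.sub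
    (hL.mul (hasDerivAt_id ρ))).add (hasDerivAt_log_one_add_exp ρ))).congr_deriv ?_
  rw [logit_mu1, logit, lam1]
  simp only [id]
  ring

section NearZero

variable (ρt : ℝ)

lemma tendsto_fst_nhdsWithin_Ioi_prod :
    Tendsto Prod.fst (𝓝[Ioi 0 ×ˢ univ] ((0 : ℝ), ρt)) (𝓝 0) :=
  (continuous_fst.tendsto ((0 : ℝ), ρt)).mono_left nhdsWithin_le_nhds

lemma tendsto_mu1_snd_nhdsWithin_Ioi_prod :
    Tendsto (fun q : ℝ × ℝ => mu1 q.2) (𝓝[Ioi 0 ×ˢ univ] ((0 : ℝ), ρt)) (𝓝 (mu1 ρt)) := by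
  rw [mu1_eq_sigmoid]
  exact ((continuous_sigmoid.comp continuous_snd).tendsto ((0 : ℝ), ρt)).mono_left
    nhdsWithin_le_nhds

lemma eventually_fst_mem_Ioo : ∀ᶠ q : ℝ × ℝ in 𝓝[Ioi 0 ×ˢ univ] ((0 : ℝ), ρt), q.1 ∈ Ioo 0 1 :=
  (eventually_mem_nhdsWithin.mono fun _ hq => (mem_prod.1 hq).1).and
    ((tendsto_fst_nhdsWithin_Ioi_prod ρt).eventually_lt_const one_pos)

variable {ρt} {x : ℝ}

lemma isLittleO_logit_lam1_sub (hx : x ∈ Icc 0 1) :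
    (fun q : ℝ × ℝ => logit (lam1 q.1 q.2 x) - logit (mu1 q.2)
      - ((mu1 ρt)⁻¹ + (1 - mu1 ρt)⁻¹) * (q.1 * (x - mu1 q.2)))
      =o[𝓝[Ioi 0 ×ˢ univ] ((0 : ℝ), ρt)] Prod.fst := by
  have hs := tendsto_fst_nhdsWithin_Ioi_prod ρt
  have hμ := tendsto_mu1_snd_nhdsWithin_Ioi_prod ρt
  have hl : Tendsto (fun q : ℝ × ℝ => lam1 q.1 q.2 x) (𝓝[Ioi 0 ×ˢ univ] ((0 : ℝ), ρt))
      (𝓝 (mu1 ρt)) := by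
    simpa [lam1] using ((hs.const_sub 1).mul hμ).add (hs.mul_const x)
  have hremainder := ((hasStrictDerivAt_logit (mu1_mem_Ioo ρt)).isLittleO).comp_tendsto
    (hl.prodMk_nhds hμ)
  have hstep :
      (fun q : ℝ × ℝ => q.1 * (x - mu1 q.2)) =O[𝓝[Ioi 0 ×ˢ univ] ((0 : ℝ), ρt)] Prod.fst := by
    refine .of_bound 1 (.of_forall fun q => ?_)
    obtain ⟨hμ₀, hμ₁⟩ := mu1_mem_Ioo q.2
    have : |x - mu1 q.2| ≤ 1 := abs_le.2 ⟨by linarith [hx.1], by linarith [hx.2]⟩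
    rw [norm_mul, one_mul]
    exact mul_le_of_le_one_right (norm_nonneg _) this
  refine (hremainder.trans_isBigO ?_).congr' (.of_forall fun q => ?_) (.refl _ _)
  · exact hstep.congr_left fun q => (lam1_sub_mu1 _ _ _).symm
  · simp [lam1_sub_mu1, mul_comm]

lemma isLittleO_deriv_B1 (hx : x ∈ Icc 0 1) :
    (fun q : ℝ × ℝ => deriv (fun r => B1 q.1 r x) q.2)
      =o[𝓝[Ioi 0 ×ˢ univ] ((0 : ℝ), ρt)] Prod.fst := by
  obtain ⟨hc₀, hc₁⟩ := mu1_mem_Ioo ρt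
  set c := mu1 ρt
  set k := c⁻¹ + (1 - c)⁻¹
  set m : ℝ → ℝ := fun ρ => mu1 ρ * (1 - mu1 ρ)
  have hs := tendsto_fst_nhdsWithin_Ioi_prod ρt
  have hμ := tendsto_mu1_snd_nhdsWithin_Ioi_prod ρt
  have hm : Tendsto (fun q : ℝ × ℝ => (1 - q.1) * m q.2) (𝓝[Ioi 0 ×ˢ univ] ((0 : ℝ), ρt))
      (𝓝 (c * (1 - c))) := by
    simpa using (hs.const_sub 1).mul (hμ.mul (hμ.const_sub 1))
  have hck : c * (1 - c) * k = 1 := by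
    have : 1 - c ≠ 0 := by linarith
    simp only [k]
    field_simp
    ring
  -- `deriv = (1 - s) m E + s (x - μ) ((1 - s) m k - 1)` with `E` the remainder of `logit` at `c`
  have hfirst := (hm.isBigO_one ℝ |>.mul_isLittleO (isLittleO_logit_lam1_sub hx)).congr_right
    (g₂ := Prod.fst) fun q => one_mul _
  have hsmall : Tendsto (fun q : ℝ × ℝ => (x - mu1 q.2) * ((1 - q.1) * m q.2 * k - 1))
      (𝓝[Ioi 0 ×ˢ univ] ((0 : ℝ), ρt)) (𝓝 0) := by
    simpa [hck] using (hμ.const_sub x).mul ((hm.mul_const k).sub_const 1)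
  have hsecond := ((isBigO_refl Prod.fst _).mul_isLittleO
    ((isLittleO_one_iff ℝ).2 hsmall)).congr_right (g₂ := Prod.fst) fun q => mul_one _
  refine (hfirst.add hsecond).congr' ?_ (.refl _ _)
  filter_upwards [eventually_fst_mem_Ioo ρt] with q hq
  rw [(hasDerivAt_B1 hq.1.le hq.2 hx q.2).deriv]
  ring

lemma isBigO_Dt_B1 (hx : x ∈ Icc 0 1) (hxρt : x ≠ mu1 ρt) {Dt : ℝ → ℝ → ℝ}
    (hDt : ∀ t : ℝ, 0 < t → ∀ ρ : ℝ, HasDerivAt (fun t' => D1 t' ρ) (Dt t ρ) t) :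
    (fun q : ℝ × ℝ => Dt (B1 q.1 q.2 x) q.2)
      =O[𝓝[Ioi 0 ×ˢ univ] ((0 : ℝ), ρt)] fun q => q.1⁻¹ := by
  set δ := |x - mu1 ρt| / 2
  have hδ : 0 < δ := by positivity
  have hfar : ∀ᶠ q : ℝ × ℝ in 𝓝[Ioi 0 ×ˢ univ] ((0 : ℝ), ρt), δ < |x - mu1 q.2| :=
    ((tendsto_mu1_snd_nhdsWithin_Ioi_prod ρt).const_sub x).abs.eventually_const_lt
      (by simp only [δ]; linarith [abs_pos.2 (sub_ne_zero.2 hxρt)])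
  refine .of_bound δ⁻¹ ?_
  filter_upwards [hfar, eventually_fst_mem_Ioo ρt] with q hq hs
  have hsδ : 0 < q.1 * δ := mul_pos hs.1 hδ
  have hB : q.1 * δ ≤ √(B1 q.1 q.2 x / 2) := by
    refine le_sqrt_of_sq_le ?_
    have := two_mul_sq_le_B1 (Ioo_subset_Icc_self hs) hx q.2
    rw [mul_pow, ← sq_abs (x - mu1 q.2)] at this
    nlinarith [pow_le_pow_left₀ hδ.le hq.le 2, sq_nonneg q.1]
  have hBpos : 0 < B1 q.1 q.2 x := by linarith [sqrt_pos.1 (hsδ.trans_le hB)]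
  have hDt_le := le_inv_sqrt_of_hasDerivAt_D1 hBpos (hDt _ hBpos q.2)
  rw [norm_of_nonneg ((hDt _ hBpos q.2).nonneg_of_monotone (monotone_D1 q.2)),
    norm_of_nonneg (inv_pos.2 hs.1).le, ← mul_inv, mul_comm]
  exact hDt_le.trans (inv_anti₀ hsδ hB)

end NearZero

theorem Dt_Brho_tendsto_zero_general (ρt : ℝ) (x : ℝ) (hx : x = 0 ∨ x = 1)
    (Dt : ℝ → ℝ → ℝ)
    (hDt : ∀ t : ℝ, 0 < t → ∀ ρ : ℝ, HasDerivAt (fun t' => D1 t' ρ) (Dt t ρ) t) :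
    Filter.Tendsto
      (fun q : ℝ × ℝ => Dt (B1 q.1 q.2 x) q.2 * deriv (fun r => B1 q.1 r x) q.2)
      (nhdsWithin (0, ρt) (Set.Ioi (0 : ℝ) ×ˢ (Set.univ : Set ℝ)))
      (nhds 0) := by
  obtain ⟨hμ₀, hμ₁⟩ := mu1_mem_Ioo ρt
  have hxI : x ∈ Icc 0 1 := by rcases hx with rfl | rfl <;> simp
  have hxμ : x ≠ mu1 ρt := by rcases hx with rfl | rfl <;> intro h <;> linarith
  have hprod := (isBigO_Dt_B1 hxI hxμ hDt).mul_isLittleO (isLittleO_deriv_B1 hxI)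
  refine (isLittleO_one_iff ℝ).1 (hprod.congr' (.refl _ _) ?_)
  filter_upwards [eventually_fst_mem_Ioo ρt] with q hq
  exact inv_mul_cancel₀ hq.1.ne'

/-- for m = 1, the product D_t(B(s,ρ,x),ρ)·B_ρ(s,ρ,x) tends to 0 as
(s,ρ) → (0⁺,ρ̃); hence it extends continuously to s = 0 with value 0. -/
theorem Dt_Brho_tendsto_zero (ρt : ℝ) (x : ℝ) (hx : x = 0 ∨ x = 1)
    (Dt : ℝ → ℝ → ℝ)
    (hDt : ∀ t : ℝ, 0 < t → ∀ ρ : ℝ, HasDerivAt (fun t' => D1 t' ρ) (Dt t ρ) t)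
    (hDtc : ContinuousOn (fun q : ℝ × ℝ => Dt q.1 q.2)
      (Set.Ioi (0 : ℝ) ×ˢ (Set.univ : Set ℝ))) :
    Filter.Tendsto
      (fun q : ℝ × ℝ => Dt (B1 q.1 q.2 x) q.2 * deriv (fun r => B1 q.1 r x) q.2)
      (nhdsWithin (0, ρt) (Set.Ioi (0 : ℝ) ×ˢ (Set.univ : Set ℝ)))
      (nhds 0) :=
  Dt_Brho_tendsto_zero_general ρt x hx Dt hDt
end
end
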